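/- Let S be an inverse semigroup satisfying xⁿ = xⁿ⁺¹ for some n ≥ 1, and define a ⊕ b := (a·b⁻¹)ⁿ·a. Then ⊕ is commutative: a ⊕ b = b ⊕ a for all a, b ∈ S. -/
import Mathlib


/-- `pw x n` is the power `xⁿ` in a semigroup, for `n ≥ 1`
(with junk value `pw x 0 = x`). -/
def pw {S : Type*} [Mul S] (x : S) : ℕ → S
  | 0 => x
  | 1 => x
  | n + 2 => pw x (n + 1) * x

private lemma pw_succ {S : Type*} [Mul S] (x : S) : ∀ {n : ℕ}, 1 ≤ n →
    pw x (n+1) = pw x n * x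
  | _+1, _ => rfl

private lemma pw_succ' {S : Type*} [Semigroup S] (x : S) : ∀ {n : ℕ}, 1 ≤ n →
    pw x (n+1) = x * pw x n
  | 1, _ => rfl
  | n+2, _ => by
    have hn1 : 1 ≤ n+1 := by omega
    show pw x (n+2) * x = x * pw x (n+2)
    conv_rhs => rw [show pw x (n+2) = x * pw x (n+1) from pw_succ' x hn1]
    conv_lhs => rw [show pw x (n+2) = x * pw x (n+1) from pw_succ' x hn1]
    rw [mul_assoc, show pw x (n+1) * x = x * pw x (n+1) from pw_succ' x hn1]

private lemma pw_shift {S : Type*} [Semigroup S] (a b : S) : ∀ {n : ℕ}, 1 ≤ n →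
    pw (a*b) n * a = a * pw (b*a) n
  | 1, _ => by show (a*b)*a = a*(b*a); rw [mul_assoc]
  | n+2, _ => by
    have hn1 : 1 ≤ n+1 := by omega
    show (pw (a*b) (n+1) * (a*b)) * a = a * (pw (b*a) (n+1) * (b*a))
    calc (pw (a*b) (n+1) * (a*b)) * a
        = (pw (a*b) (n+1) * a) * (b*a) := by simp only [mul_assoc]
      _ = (a * pw (b*a) (n+1)) * (b*a) := by rw [pw_shift a b hn1]
      _ = a * (pw (b*a) (n+1) * (b*a)) := by rw [mul_assoc]

private lemma pw_absorbL {S : Type*} [Semigroup S] {j y : S} (h : j * y = y) :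
    ∀ {k : ℕ}, 1 ≤ k → j * pw y k = pw y k
  | 1, _ => h
  | k+2, _ => by
    have hk1 : 1 ≤ k+1 := by omega
    show j * (pw y (k+1) * y) = pw y (k+1) * y
    rw [← mul_assoc, pw_absorbL h hk1]

private lemma pw_absorbR {S : Type*} [Semigroup S] {e y : S} (h : e * y = e) :
    ∀ {k : ℕ}, 1 ≤ k → e * pw y k = e
  | 1, _ => h
  | k+2, _ => by
    have hk1 : 1 ≤ k+1 := by omega
    show e * (pw y (k+1) * y) = e
    rw [← mul_assoc, pw_absorbR h hk1, h]

private lemma pw_inv {S : Type*} [Semigroup S] (inv : S → S)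
    (hm : ∀ x y, inv (x*y) = inv y * inv x) (x : S) : ∀ {n : ℕ}, 1 ≤ n →
    pw (inv x) n = inv (pw x n)
  | 1, _ => rfl
  | n+2, _ => by
    have hn1 : 1 ≤ n+1 := by omega
    show pw (inv x) (n+1) * inv x = inv (pw x (n+2))
    conv_rhs => rw [show pw x (n+2) = x * pw x (n+1) from pw_succ' x hn1]
    rw [hm, pw_inv inv hm x hn1]

/-- In an inverse semigroup satisfying xⁿ = xⁿ⁺¹ (n ≥ 1), the operation
a ⊕ b := (a * b⁻¹)ⁿ * a is commutative. -/
theorem stmt_8 {S : Type*} [Semigroup S] (inv : S → S)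
    (h1 : ∀ x, x * inv x * x = x)
    (h2 : ∀ x, inv x * x * inv x = inv x)
    (huniq : ∀ x y, x * y * x = x → y * x * y = y → y = inv x)
    (n : ℕ) (hn : 1 ≤ n) (hid : ∀ x : S, pw x n = pw x (n + 1))
    (a b : S) :
    pw (a * inv b) n * a = pw (b * inv a) n * b := by
  have h1r : ∀ x : S, x * (inv x * x) = x := fun x => by rw [← mul_assoc]; exact h1 x
  have h2r : ∀ x : S, inv x * (x * inv x) = inv x := fun x => by rw [← mul_assoc]; exact h2 x
  have hinvinv : ∀ x, inv (inv x) = x := fun x =>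
    (huniq (inv x) x (h2 x) (h1 x)).symm
  have hidem_inv : ∀ e : S, e*e = e → inv e = e := fun e he =>
    (huniq e e (by rw [he, he]) (by rw [he, he])).symm
  -- a product of idempotents is idempotent
  have hprod : ∀ e f : S, e*e = e → f*f = f → (e*f)*(e*f) = e*f := by
    intro e f he hf
    have he' : ∀ z : S, e*(e*z) = e*z := fun z => by rw [← mul_assoc, he]
    have hf' : ∀ z : S, f*(f*z) = f*z := fun z => by rw [← mul_assoc, hf]
    set g := inv (e*f) with hg
    have hA : (e*f)*(f*(g*e))*(e*f) = e*f := by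
      have h := h1 (e*f)
      simp only [← hg] at h
      simp only [mul_assoc] at h ⊢
      rw [hf', he']
      exact h
    have hB : (f*(g*e))*(e*f)*(f*(g*e)) = f*(g*e) := by
      have h := h2 (e*f)
      simp only [← hg] at h
      have h2g : ∀ z : S, g*(e*(f*(g*z))) = g*z := fun z => by
        have := congrArg (· * z) h
        simp only [mul_assoc] at this
        exact this
      simp only [mul_assoc]
      rw [he', hf', h2g]
    have hkey : f*(g*e) = g := by rw [hg]; exact huniq _ _ hA hB
    have h2g : ∀ z : S, g*(e*(f*(g*z))) = g*z := fun z => by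
      have h := h2 (e*f)
      simp only [← hg] at h
      have := congrArg (· * z) h
      simp only [mul_assoc] at this
      exact this
    have hgidem : g*g = g := by
      conv_lhs => rw [← hkey]
      calc (f*(g*e))*(f*(g*e)) = f*(g*(e*(f*(g*e)))) := by simp only [mul_assoc]
        _ = f*(g*e) := by rw [h2g]
        _ = g := hkey
    have hef_eq : e*f = g := by
      have c1 : g*(e*f)*g = g := by have := h2 (e*f); simpa only [← hg] using this
      have c2 : (e*f)*g*(e*f) = e*f := by have := h1 (e*f); simpa only [← hg] using this
      have := huniq g (e*f) c1 c2
      rw [this, hidem_inv g hgidem]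
    rw [hef_eq]; exact hgidem
  -- idempotents commute
  have hcom : ∀ e f : S, e*e = e → f*f = f → e*f = f*e := by
    intro e f he hf
    have hef := hprod e f he hf
    have hfe := hprod f e hf he
    have he' : ∀ z : S, e*(e*z) = e*z := fun z => by rw [← mul_assoc, he]
    have hf' : ∀ z : S, f*(f*z) = f*z := fun z => by rw [← mul_assoc, hf]
    have C : (e*f)*(f*e)*(e*f) = e*f := by
      calc (e*f)*(f*e)*(e*f) = e*(f*(f*(e*(e*f)))) := by simp only [mul_assoc]
        _ = e*(f*(e*f)) := by rw [hf', he']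
        _ = (e*f)*(e*f) := by simp only [mul_assoc]
        _ = e*f := hef
    have D : (f*e)*(e*f)*(f*e) = f*e := by
      calc (f*e)*(e*f)*(f*e) = f*(e*(e*(f*(f*e)))) := by simp only [mul_assoc]
        _ = f*(e*(f*e)) := by rw [he', hf']
        _ = (f*e)*(f*e) := by simp only [mul_assoc]
        _ = f*e := hfe
    have hD : f*e = inv (e*f) := huniq (e*f) (f*e) C D
    exact (hidem_inv (e*f) hef).symm.trans hD.symm
  -- anti-homomorphism property of inv
  have hm : ∀ x y : S, inv (x*y) = inv y * inv x := by
    intro x y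
    have e1 : (y*inv y)*(y*inv y) = y*inv y := by rw [mul_assoc, h2r]
    have e2 : (inv x*x)*(inv x*x) = inv x*x := by rw [mul_assoc, h1r]
    have hc := hcom _ _ e1 e2
    refine (huniq (x*y) (inv y * inv x) ?_ ?_).symm
    · have inner : (y*inv y)*((inv x*x)*y) = (inv x*x)*((y*inv y)*y) := by
        rw [← mul_assoc, hc, mul_assoc]
      calc (x*y)*(inv y*inv x)*(x*y)
          = x*((y*inv y)*((inv x*x)*y)) := by simp only [mul_assoc]
        _ = x*((inv x*x)*((y*inv y)*y)) := by rw [inner]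
        _ = x*((inv x*x)*y) := by rw [h1 y]
        _ = x*y := by rw [← mul_assoc, h1r]
    · have inner2 : (inv x*x)*((y*inv y)*inv x) = (y*inv y)*((inv x*x)*inv x) := by
        rw [← mul_assoc, ← hc, mul_assoc]
      calc (inv y*inv x)*(x*y)*(inv y*inv x)
          = inv y*((inv x*x)*((y*inv y)*inv x)) := by simp only [mul_assoc]
        _ = inv y*((y*inv y)*((inv x*x)*inv x)) := by rw [inner2]
        _ = inv y*((y*inv y)*inv x) := by rw [h2 x]
        _ = inv y*inv x := by rw [← mul_assoc, h2r]
  -- power facts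
  have hstep : ∀ z : S, pw z n * z = pw z n := fun z => by
    rw [← pw_succ z hn, ← hid]
  have hidem_pw : ∀ z : S, pw z n * pw z n = pw z n := fun z => pw_absorbR (hstep z) hn
  -- main argument
  have hshift := pw_shift a (inv b) hn
  have hjy : (inv b * b) * (inv b * a) = inv b * a := by rw [← mul_assoc, h2]
  have hjabs : (inv b * b) * pw (inv b * a) n = pw (inv b * a) n := pw_absorbL hjy hn
  have hjidem : (inv b * b)*(inv b * b) = inv b * b := by rw [mul_assoc, h1r]
  have hcomj := hcom _ _ (hidem_pw (inv b * a)) hjidem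
  have key1 : (pw (a * inv b) n * a) * (inv b * b) = pw (a * inv b) n * a := by
    calc (pw (a * inv b) n * a) * (inv b * b)
        = (a * pw (inv b * a) n) * (inv b * b) := by rw [hshift]
      _ = a * (pw (inv b * a) n * (inv b * b)) := by rw [mul_assoc]
      _ = a * ((inv b * b) * pw (inv b * a) n) := by rw [hcomj]
      _ = a * pw (inv b * a) n := by rw [hjabs]
      _ = pw (a * inv b) n * a := hshift.symm
  have key2 : (pw (a * inv b) n * a) * (inv b * b) = pw (a * inv b) n * b := by
    calc (pw (a * inv b) n * a) * (inv b * b)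
        = (pw (a * inv b) n * (a * inv b)) * b := by simp only [mul_assoc]
      _ = pw (a * inv b) n * b := by rw [hstep]
  have hab : pw (a * inv b) n * a = pw (a * inv b) n * b := key1.symm.trans key2
  have hinv_x : inv (a * inv b) = b * inv a := by rw [hm, hinvinv]
  have hfe : pw (b * inv a) n = pw (a * inv b) n := by
    rw [← hinv_x, pw_inv inv hm _ hn, hidem_inv _ (hidem_pw (a * inv b))]
  rw [hfe]; exact hab
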